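/- The maps r_i and _ir on the free algebra satisfy the commutation relation: for all homogeneous x and all i, j ∈ I, _jr(r_i(x)) = r_i(_jr(x)). -/

import Mathlib

/-!
Both twisted Leibniz rules peel the first letter off a word `θ_x y`. Doing this on both sides of
`_jr (r_i (θ_x y)) = r_i (_jr (θ_x y))` and using induction for `y`, what remains differs only
when `x = i`: `c(|y|, i) • _jr y` against `c(j, i) • c(|y| - j, i) • _jr y`, for the
bicharacter `c = twist`. These agree because `c` is multiplicative in its first argument, and
`_jr y` vanishes unless `j` occurs in `y` and is otherwise homogeneous of degree `|y| - j`.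
-/

noncomputable section

def wdeg {I : Type*} [DecidableEq I] (w : FreeMonoid I) : I →₀ ℕ :=
  (w.toList.map fun i => Finsupp.single i 1).sum

def angN {I : Type*} (form : I → I → ℤ) (ν μ : I →₀ ℕ) : ℤ :=
  ν.sum fun i a => μ.sum fun j b => (a : ℤ) * (b : ℤ) * form i j

def dotN {I : Type*} (form : I → I → ℤ) (ν μ : I →₀ ℕ) : ℤ :=
  angN form ν μ + angN form μ ν

abbrev FreeAlg (K : Type*) [Field K] (I : Type*) : Type _ :=
  MonoidAlgebra K (FreeMonoid I)

def theta {K : Type*} [Field K] {I : Type*} (i : I) : FreeAlg K I :=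
  MonoidAlgebra.of K (FreeMonoid I) (FreeMonoid.of i)

def IsHomog {K : Type*} [Field K] {I : Type*} [DecidableEq I]
    (x : FreeAlg K I) (ν : I →₀ ℕ) : Prop :=
  ∀ w ∈ x.coeff.support, wdeg w = ν

section Bicharacter

variable {I : Type*} (form : I → I → ℤ)

lemma angN_add_left (ν ν' μ : I →₀ ℕ) :
    angN form (ν + ν') μ = angN form ν μ + angN form ν' μ :=
  Finsupp.sum_add_index' (fun _ => by simp) fun _ _ _ => by
    simp only [Nat.cast_add, add_mul, Finsupp.sum_add]

lemma angN_add_right (ν μ μ' : I →₀ ℕ) :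
    angN form ν (μ + μ') = angN form ν μ + angN form ν μ' := by
  rw [angN, angN, angN, ← Finsupp.sum_add]
  refine Finsupp.sum_congr fun i _ => Finsupp.sum_add_index' (fun _ => by simp) fun _ _ _ => ?_
  simp only [Nat.cast_add, mul_add, add_mul]

lemma dotN_comm (ν μ : I →₀ ℕ) : dotN form ν μ = dotN form μ ν :=
  add_comm _ _

variable {G : Type*} [CommGroup G]

/-- The rule for `r_i` twists by `twist |y| i`, the one for `_ir` by `twist i |x|`. -/
def twist (v t : G) (ν μ : I →₀ ℕ) : G :=
  v ^ dotN form ν μ * t ^ (angN form ν μ - angN form μ ν)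

lemma twist_add_left (v t : G) (ν ν' μ : I →₀ ℕ) :
    twist form v t (ν + ν') μ = twist form v t ν μ * twist form v t ν' μ := by
  simp only [twist, dotN, angN_add_left, angN_add_right]
  rw [show ∀ a a' b b' : ℤ, a + a' + (b + b') = (a + b) + (a' + b') by intros; ring,
    show ∀ a a' b b' : ℤ, a + a' - (b + b') = (a - b) + (a' - b') by intros; ring,
    zpow_add, zpow_add t, mul_mul_mul_comm]

end Bicharacter

section Homogeneous

variable {I : Type*} {K : Type*} [Field K]

lemma theta_mul_of (i : I) (w : FreeMonoid I) :
    theta i * MonoidAlgebra.of K (FreeMonoid I) w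
      = MonoidAlgebra.of K (FreeMonoid I) (FreeMonoid.of i * w) :=
  (map_mul _ _ _).symm

variable [DecidableEq I]

lemma wdeg_of_mul (i : I) (w : FreeMonoid I) :
    wdeg (FreeMonoid.of i * w) = Finsupp.single i 1 + wdeg w := by
  simp [wdeg, FreeMonoid.toList_mul]

lemma IsHomog.zero (ν : I →₀ ℕ) : IsHomog (0 : FreeAlg K I) ν := by
  simp [IsHomog]

lemma IsHomog.smul (c : K) {x : FreeAlg K I} {ν : I →₀ ℕ} (h : IsHomog x ν) :
    IsHomog (c • x) ν :=
  fun w hw => h w (Finsupp.support_smul hw)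

lemma IsHomog.add {x y : FreeAlg K I} {ν : I →₀ ℕ} (hx : IsHomog x ν) (hy : IsHomog y ν) :
    IsHomog (x + y) ν := fun w hw => by
  classical
  rcases Finset.mem_union.1 (Finsupp.support_add hw) with h | h
  exacts [hx w h, hy w h]

lemma IsHomog.mul {x y : FreeAlg K I} {ν μ : I →₀ ℕ} (hx : IsHomog x ν)
    (hy : IsHomog y μ) : IsHomog (x * y) (ν + μ) := fun w hw => by
  classical
  obtain ⟨a, ha, b, hb, rfl⟩ :=
    Finset.mem_mul.1 (MonoidAlgebra.support_coeff_mul_subset x y hw)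
  simp only [wdeg, FreeMonoid.toList_mul, List.map_append, List.sum_append]
  rw [← wdeg, ← wdeg, hx a ha, hy b hb]

lemma isHomog_of (w : FreeMonoid I) :
    IsHomog (MonoidAlgebra.of K (FreeMonoid I) w) (wdeg w) := by
  intro u hu
  rw [Finset.mem_singleton.1 (Finsupp.support_single_subset hu)]

lemma isHomog_theta (i : I) : IsHomog (theta i : FreeAlg K I) (Finsupp.single i 1) := by
  have h := isHomog_of (K := K) (FreeMonoid.of i)
  rwa [show wdeg (FreeMonoid.of i) = Finsupp.single i 1 by simp [wdeg]] at h

end Homogeneous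

section TwistedDerivation

variable {I : Type*} [DecidableEq I] {K : Type*} [Field K]
  {D : FreeAlg K I →ₗ[K] FreeAlg K I} {i : I}

theorem apply_of_eq_zero_of_wdeg_eq_zero (hD1 : D 1 = 0)
    (hD : ∀ (x : I) (y : FreeAlg K I) (μ : I →₀ ℕ), IsHomog y μ →
      ∃ a b : K, D (theta x * y) = (if i = x then a • y else 0) + b • (theta x * D y))
    {w : FreeMonoid I} (hw : wdeg w i = 0) :
    D (MonoidAlgebra.of K (FreeMonoid I) w) = 0 := by
  induction w using FreeMonoid.recOn with
  | one => rw [map_one, hD1]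
  | of_mul x w ih =>
    rw [wdeg_of_mul, Finsupp.add_apply, Nat.add_eq_zero_iff] at hw
    have hix : i ≠ x := by
      rintro rfl
      simp at hw
    obtain ⟨a, b, h⟩ := hD x _ _ (isHomog_of w)
    rw [← theta_mul_of, h, if_neg hix, ih hw.2, mul_zero, smul_zero, add_zero]

theorem isHomog_apply_of (hD1 : D 1 = 0)
    (hD : ∀ (x : I) (y : FreeAlg K I) (μ : I →₀ ℕ), IsHomog y μ →
      ∃ a b : K, D (theta x * y) = (if i = x then a • y else 0) + b • (theta x * D y))
    (w : FreeMonoid I) :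
    IsHomog (D (MonoidAlgebra.of K (FreeMonoid I) w)) (wdeg w - Finsupp.single i 1) := by
  induction w using FreeMonoid.recOn with
  | one =>
    rw [map_one, hD1]
    exact IsHomog.zero _
  | of_mul x w ih =>
    obtain ⟨a, b, h⟩ := hD x _ _ (isHomog_of w)
    rw [← theta_mul_of, h, wdeg_of_mul]
    refine IsHomog.add ?_ (IsHomog.smul b ?_)
    · split_ifs with hix
      · subst hix
        rw [add_tsub_cancel_left]
        exact (isHomog_of w).smul a
      · exact IsHomog.zero _
    · by_cases hwi : wdeg w i = 0
      · rw [apply_of_eq_zero_of_wdeg_eq_zero hD1 hD hwi, mul_zero]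
        exact IsHomog.zero _
      · rw [add_tsub_assoc_of_le (Finsupp.single_le_iff.2 (Nat.one_le_iff_ne_zero.2 hwi))]
        exact (isHomog_theta x).mul ih

theorem comm_apply_of {R L : FreeAlg K I →ₗ[K] FreeAlg K I} {i j : I} (form : I → I → ℤ)
    (v t : Kˣ) (hR1 : R 1 = 0) (hL1 : L 1 = 0)
    (hR : ∀ (x : I) (y : FreeAlg K I) (μ : I →₀ ℕ), IsHomog y μ →
      R (theta x * y) =
        (if i = x then ((twist form v t μ (Finsupp.single i 1) : Kˣ) : K) • y else 0) +
          theta x * R y)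
    (hL : ∀ (x : I) (y : FreeAlg K I) (μ : I →₀ ℕ), IsHomog y μ →
      L (theta x * y) = (if j = x then y else 0) +
        ((twist form v t (Finsupp.single j 1) (Finsupp.single x 1) : Kˣ) : K) • (theta x * L y))
    (w : FreeMonoid I) :
    L (R (MonoidAlgebra.of K (FreeMonoid I) w)) = R (L (MonoidAlgebra.of K (FreeMonoid I) w)) := by
  have hR' : ∀ (x : I) (y : FreeAlg K I) (μ : I →₀ ℕ), IsHomog y μ →
      ∃ a b : K, R (theta x * y) = (if i = x then a • y else 0) + b • (theta x * R y) :=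
    fun x y μ hy =>
      ⟨(twist form v t μ (Finsupp.single i 1) : Kˣ), 1, by rw [hR x y μ hy, one_smul]⟩
  have hL' : ∀ (x : I) (y : FreeAlg K I) (μ : I →₀ ℕ), IsHomog y μ →
      ∃ a b : K, L (theta x * y) = (if j = x then a • y else 0) + b • (theta x * L y) :=
    fun x y μ hy => ⟨1, _, by rw [hL x y μ hy, one_smul]⟩
  induction w using FreeMonoid.recOn with
  | one => rw [map_one, hR1, hL1, map_zero, map_zero]
  | of_mul x w ih =>
    have hRy := isHomog_apply_of hR1 hR' w
    have hLy := isHomog_apply_of hL1 hL' w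
    set y := MonoidAlgebra.of K (FreeMonoid I) w
    have key :
        (if i = x then ((twist form v t (wdeg w) (Finsupp.single i 1) : Kˣ) : K) • L y else 0) =
        ((twist form v t (Finsupp.single j 1) (Finsupp.single x 1) : Kˣ) : K) •
          if i = x then
            ((twist form v t (wdeg w - Finsupp.single j 1) (Finsupp.single i 1) : Kˣ) : K) • L y
          else 0 := by
      split_ifs with hix
      · subst hix
        by_cases hwj : wdeg w j = 0
        · rw [apply_of_eq_zero_of_wdeg_eq_zero hL1 hL' hwj, smul_zero, smul_zero, smul_zero]
        · rw [smul_smul, ← Units.val_mul, ← twist_add_left,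
            add_tsub_cancel_of_le (Finsupp.single_le_iff.2 (Nat.one_le_iff_ne_zero.2 hwj))]
      · rw [smul_zero]
    rw [← theta_mul_of, hR x y _ (isHomog_of w), hL x y _ (isHomog_of w), map_add, map_add,
      map_smul, hL x _ _ hRy, hR x _ _ hLy, ih]
    simp only [apply_ite, map_smul, map_zero, smul_add, key]
    abel

end TwistedDerivation

theorem ri_jr_comm_general {I : Type*} [DecidableEq I] {K : Type*} [Field K]
    (v t : Kˣ) (form : I → I → ℤ)
    (R L : I → FreeAlg K I →ₗ[K] FreeAlg K I)
    (hR1 : ∀ i, R i 1 = 0)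
    (hRθ : ∀ i j, R i (theta j) = if i = j then 1 else 0)
    (hRmul : ∀ (i : I) (x y : FreeAlg K I) (ν μ : I →₀ ℕ), IsHomog x ν → IsHomog y μ →
      R i (x * y) =
        ((v ^ dotN form (Finsupp.single i 1) μ *
          t ^ (angN form μ (Finsupp.single i 1) - angN form (Finsupp.single i 1) μ) : Kˣ) : K) •
          (R i x * y) + x * R i y)
    (hL1 : ∀ i, L i 1 = 0)
    (hLθ : ∀ i j, L i (theta j) = if i = j then 1 else 0)
    (hLmul : ∀ (i : I) (x y : FreeAlg K I) (ν μ : I →₀ ℕ), IsHomog x ν → IsHomog y μ →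
      L i (x * y) =
        L i x * y +
        ((v ^ dotN form (Finsupp.single i 1) ν *
          t ^ (angN form (Finsupp.single i 1) ν - angN form ν (Finsupp.single i 1)) : Kˣ) : K) •
          (x * L i y)) :
    ∀ (i j : I) (x : FreeAlg K I) (ν : I →₀ ℕ), IsHomog x ν →
      L j (R i x) = R i (L j x) := by
  rintro i j x - -
  have hR : ∀ (x : I) (y : FreeAlg K I) (μ : I →₀ ℕ), IsHomog y μ →
      R i (theta x * y) =
        (if i = x then ((twist form v t μ (Finsupp.single i 1) : Kˣ) : K) • y else 0) +
          theta x * R i y := by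
    intro x y μ hy
    rw [hRmul i _ _ _ _ (isHomog_theta x) hy, hRθ, twist, dotN_comm form μ]
    split_ifs <;> simp
  have hL : ∀ (x : I) (y : FreeAlg K I) (μ : I →₀ ℕ), IsHomog y μ →
      L j (theta x * y) = (if j = x then y else 0) +
        ((twist form v t (Finsupp.single j 1) (Finsupp.single x 1) : Kˣ) : K) •
          (theta x * L j y) := by
    intro x y μ hy
    rw [hLmul j _ _ _ _ (isHomog_theta x) hy, hLθ]
    split_ifs <;> simp [twist]
  induction x using MonoidAlgebra.induction_on with
  | of w => exact comm_apply_of form v t (hR1 i) (hL1 j) hR hL w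
  | add f g hf hg => rw [map_add, map_add, hf, hg, map_add, map_add]
  | smul r f hf => rw [map_smul, map_smul, hf, map_smul, map_smul]

/-- the twisted derivations `r_i` and `_jr` commute:
`_jr(r_i(x)) = r_i(_jr(x))` for all homogeneous `x` and all `i, j ∈ I`. -/
theorem ri_jr_comm {I : Type*} [Fintype I] [DecidableEq I] {K : Type*} [Field K]
    (v t : Kˣ) (form : I → I → ℤ)
    (R L : I → FreeAlg K I →ₗ[K] FreeAlg K I)
    (hR1 : ∀ i, R i 1 = 0)
    (hRθ : ∀ i j, R i (theta j) = if i = j then 1 else 0)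
    (hRmul : ∀ (i : I) (x y : FreeAlg K I) (ν μ : I →₀ ℕ), IsHomog x ν → IsHomog y μ →
      R i (x * y) =
        ((v ^ dotN form (Finsupp.single i 1) μ *
          t ^ (angN form μ (Finsupp.single i 1) - angN form (Finsupp.single i 1) μ) : Kˣ) : K) •
          (R i x * y) + x * R i y)
    (hL1 : ∀ i, L i 1 = 0)
    (hLθ : ∀ i j, L i (theta j) = if i = j then 1 else 0)
    (hLmul : ∀ (i : I) (x y : FreeAlg K I) (ν μ : I →₀ ℕ), IsHomog x ν → IsHomog y μ →
      L i (x * y) =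
        L i x * y +
        ((v ^ dotN form (Finsupp.single i 1) ν *
          t ^ (angN form (Finsupp.single i 1) ν - angN form ν (Finsupp.single i 1)) : Kˣ) : K) •
          (x * L i y)) :
    ∀ (i j : I) (x : FreeAlg K I) (ν : I →₀ ℕ), IsHomog x ν →
      L j (R i x) = R i (L j x) :=
  ri_jr_comm_general v t form R L hR1 hRθ hRmul hL1 hLθ hLmul

end
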